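/- Fix real numbers β > 0 and R > 0, and for α > 0 define 𝒫₁^lim(α) = 1 − 1/(1 + (α/β)·2^R), 𝒫₂^lim(α) = 1 − 1/(1 + (1/β)·2^R), and 𝒫₃^lim(α) = 1 − (β/(β + α·2^R))·(β/(β + 2^R)). If α > 1 then 𝒫₃^lim(α) > 𝒫₁^lim(α) > 𝒫₂^lim(α); if 0 < α ≤ 1 then 𝒫₃^lim(α) > 𝒫₂^lim(α) ≥ 𝒫₁^lim(α), with equality in the last inequality exactly when α = 1. -/

import Mathlib

open Set

/-! With `q a = β / (β + a·2^R)`, one has `𝒫₁^lim = 1 − q α`, `𝒫₂^lim = 1 − q 1` and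
`𝒫₃^lim = 1 − q α · q 1`. Since `q` takes values in `(0, 1)` on positive arguments, the product
`q α · q 1` is smaller than both factors, so `𝒫₃^lim` exceeds the other two; and `q` is strictly
decreasing, so `𝒫₁^lim` and `𝒫₂^lim` compare as `α` and `1` do. -/

lemma inv_one_add_div_mul_eq_div {β : ℝ} (hβ : β ≠ 0) (a t : ℝ) :
    (1 + a / β * t)⁻¹ = β / (β + a * t) := by
  rw [div_mul_eq_mul_div, one_add_div hβ, inv_div]

lemma div_add_mul_mem_Ioo {β a t : ℝ} (hβ : 0 < β) (ha : 0 < a) (ht : 0 < t) :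
    β / (β + a * t) ∈ Ioo 0 1 :=
  ⟨by positivity, (div_lt_one (by positivity)).2 (lt_add_of_pos_right β (by positivity))⟩

lemma strictAntiOn_div_add_mul {β t : ℝ} (hβ : 0 < β) (ht : 0 < t) :
    StrictAntiOn (fun a => β / (β + a * t)) (Ici 0) := by
  intro a (ha : 0 ≤ a) b _ hab
  exact div_lt_div_of_pos_left hβ (by positivity) (by gcongr)

theorem limit_SOP_order (β R α : ℝ) (hβ : 0 < β) (hα : 0 < α) :
    (1 < α →
      1 - β / (β + α * (2 : ℝ) ^ R) * (β / (β + (2 : ℝ) ^ R)) >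
        1 - (1 + (α / β) * (2 : ℝ) ^ R)⁻¹ ∧
      1 - (1 + (α / β) * (2 : ℝ) ^ R)⁻¹ > 1 - (1 + (1 / β) * (2 : ℝ) ^ R)⁻¹) ∧
    (α ≤ 1 →
      1 - β / (β + α * (2 : ℝ) ^ R) * (β / (β + (2 : ℝ) ^ R)) >
        1 - (1 + (1 / β) * (2 : ℝ) ^ R)⁻¹ ∧
      1 - (1 + (1 / β) * (2 : ℝ) ^ R)⁻¹ ≥ 1 - (1 + (α / β) * (2 : ℝ) ^ R)⁻¹ ∧
      (1 - (1 + (1 / β) * (2 : ℝ) ^ R)⁻¹ = 1 - (1 + (α / β) * (2 : ℝ) ^ R)⁻¹ ↔ α = 1)) := by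
  have ht : 0 < (2 : ℝ) ^ R := by positivity
  have hq := strictAntiOn_div_add_mul hβ ht
  have hα_mem : α ∈ Ici (0 : ℝ) := mem_Ici.2 hα.le
  have hone_mem : (1 : ℝ) ∈ Ici (0 : ℝ) := mem_Ici.2 zero_le_one
  have hlt := hq.lt_iff_gt hα_mem hone_mem
  have hle := hq.le_iff_ge hone_mem hα_mem
  have heq := hq.injOn.eq_iff hone_mem hα_mem
  have hqα := div_add_mul_mem_Ioo hβ hα ht
  have hq1 := div_add_mul_mem_Ioo hβ one_pos ht
  simp only [inv_one_add_div_mul_eq_div hβ.ne', one_mul] at hlt hle heq hq1 ⊢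
  refine ⟨fun h => ⟨?_, ?_⟩, fun h => ⟨?_, ?_, ?_⟩⟩
  · exact sub_lt_sub_left (mul_lt_of_lt_one_right hqα.1 hq1.2) 1
  · exact sub_lt_sub_left (hlt.2 h) 1
  · exact sub_lt_sub_left (mul_lt_of_lt_one_left hq1.1 hqα.2) 1
  · exact sub_le_sub_left (hle.2 h) 1
  · exact sub_right_inj.trans (heq.trans eq_comm)
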